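/- arXiv:1011.0317 — 2 statements merged into one kernel-verified Lean document; each statement's English description precedes it below -/
import Mathlib

section
/- For every set of formulas Γ and every formula A, if CL + Γ ⊢ A then ML + G(Γ) ⊢ G(A), where G(Γ) = {G(B) : B ∈ Γ} (soundness theorem of the Gödel–Gentzen translation into minimal logic). -/
/-- Formulas of pure first-order predicate logic (de Bruijn indices;
terms are just variables, atoms are predicate symbols applied to variables). -/
inductive Formula : Type
  | bot : Formula
  | atom : ℕ → List ℕ → Formula
  | and : Formula → Formula → Formula
  | or : Formula → Formula → Formula
  | imp : Formula → Formula → Formula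
  | all : Formula → Formula
  | ex : Formula → Formula

namespace Formula

def neg (A : Formula) : Formula := A.imp bot
def iff (A B : Formula) : Formula := (A.imp B).and (B.imp A)

/-- Lift (shift by one) the free variables ≥ c. -/
def liftVar (c v : ℕ) : ℕ := if v < c then v else v + 1

def lift : ℕ → Formula → Formula
  | _, bot => bot
  | c, atom p ts => atom p (ts.map (liftVar c))
  | c, and A B => and (lift c A) (lift c B)
  | c, or A B => or (lift c A) (lift c B)
  | c, imp A B => imp (lift c A) (lift c B)
  | c, all A => all (lift (c+1) A)
  | c, ex A => ex (lift (c+1) A)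

/-- Substitute the term (variable) `t` for the bound variable at depth `c`. -/
def substVar (c t v : ℕ) : ℕ := if v < c then v else if v = c then t + c else v - 1

def subst : ℕ → ℕ → Formula → Formula
  | _, _, bot => bot
  | c, t, atom p ts => atom p (ts.map (substVar c t))
  | c, t, and A B => and (subst c t A) (subst c t B)
  | c, t, or A B => or (subst c t A) (subst c t B)
  | c, t, imp A B => imp (subst c t A) (subst c t B)
  | c, t, all A => all (subst (c+1) t A)
  | c, t, ex A => ex (subst (c+1) t A)

end Formula

/-- The three flavours of logic: minimal, intuitionistic, classical. -/
inductive Flavour : Type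
  | min | int | cl
  deriving DecidableEq

/-- Natural deduction. `Prf f Γ A`: A is derivable from hypotheses Γ in
minimal/intuitionistic/classical first-order logic according to `f`. -/
inductive Prf : Flavour → Set Formula → Formula → Prop
  | hyp {f : Flavour} {Γ : Set Formula} {A : Formula} : A ∈ Γ → Prf f Γ A
  | andI {f : Flavour} {Γ : Set Formula} {A B : Formula} : Prf f Γ A → Prf f Γ B → Prf f Γ (A.and B)
  | andE1 {f : Flavour} {Γ : Set Formula} {A B : Formula} : Prf f Γ (A.and B) → Prf f Γ A
  | andE2 {f : Flavour} {Γ : Set Formula} {A B : Formula} : Prf f Γ (A.and B) → Prf f Γ B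
  | orI1 {f : Flavour} {Γ : Set Formula} {A B : Formula} : Prf f Γ A → Prf f Γ (A.or B)
  | orI2 {f : Flavour} {Γ : Set Formula} {A B : Formula} : Prf f Γ B → Prf f Γ (A.or B)
  | orE {f : Flavour} {Γ : Set Formula} {A B C : Formula} : Prf f Γ (A.or B) → Prf f (insert A Γ) C →
      Prf f (insert B Γ) C → Prf f Γ C
  | impI {f : Flavour} {Γ : Set Formula} {A B : Formula} : Prf f (insert A Γ) B → Prf f Γ (A.imp B)
  | impE {f : Flavour} {Γ : Set Formula} {A B : Formula} : Prf f Γ (A.imp B) → Prf f Γ A → Prf f Γ B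
  | allI {f : Flavour} {Γ : Set Formula} {A : Formula} : Prf f (Formula.lift 0 '' Γ) A → Prf f Γ (Formula.all A)
  | allE {f : Flavour} {Γ : Set Formula} {A : Formula} (t : ℕ) : Prf f Γ (Formula.all A) → Prf f Γ (A.subst 0 t)
  | exI {f : Flavour} {Γ : Set Formula} {A : Formula} (t : ℕ) : Prf f Γ (A.subst 0 t) → Prf f Γ (Formula.ex A)
  | exE {f : Flavour} {Γ : Set Formula} {A B : Formula} : Prf f Γ (Formula.ex A) →
      Prf f (insert A (Formula.lift 0 '' Γ)) (B.lift 0) → Prf f Γ B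
  | exfalso {f : Flavour} {Γ : Set Formula} {A : Formula} : f ≠ Flavour.min → Prf f Γ Formula.bot → Prf f Γ A
  | dne {f : Flavour} {Γ : Set Formula} {A : Formula} : f = Flavour.cl → Prf f Γ A.neg.neg → Prf f Γ A

/-- The Gödel–Gentzen negative translation. -/
def G : Formula → Formula
  | .bot => .bot
  | .atom p ts => (Formula.atom p ts).neg.neg
  | .and A B => (G A).and (G B)
  | .or A B => ((G A).neg.and (G B).neg).neg
  | .imp A B => (G A).imp (G B)
  | .all A => .all (G A)
  | .ex A => (Formula.all (G A).neg).neg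

/-- The negative fragment: ⊥, negated atoms, closed under ∧, →, ∀. -/
inductive NF : Formula → Prop
  | bot : NF Formula.bot
  | negAtom (p : ℕ) (ts : List ℕ) : NF (Formula.atom p ts).neg
  | and {A B} : NF A → NF B → NF (A.and B)
  | imp {A B} : NF A → NF B → NF (A.imp B)
  | all {A} : NF A → NF (Formula.all A)

/-!
Induction on the classical derivation. Every translated formula lies in the negative fragment,
and negative formulas are stable (`¬¬A → A`) already in minimal logic. Stability replaces the two
classical rules, and it also lets the eliminations of `∨` and `∃` be simulated on their weak
counterparts `¬(¬A ∧ ¬B)` and `¬∀¬A`, since the conclusion of such an elimination is negative.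
-/

open Set

namespace Formula

def clOr (A B : Formula) : Formula := (A.neg.and B.neg).neg

def clEx (A : Formula) : Formula := (all A.neg).neg

@[simp] lemma lift_neg (c : ℕ) (A : Formula) : A.neg.lift c = (A.lift c).neg := rfl

@[simp] lemma subst_neg (c t : ℕ) (A : Formula) : A.neg.subst c t = (A.subst c t).neg := rfl

lemma substVar_zero_liftVar_succ (c v : ℕ) : substVar c 0 (liftVar (c + 1) v) = v := by
  simp only [substVar, liftVar]
  split_ifs <;> omega

lemma subst_zero_lift_succ (A : Formula) (c : ℕ) : (A.lift (c + 1)).subst c 0 = A := by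
  induction A generalizing c with
  | bot => rfl
  | atom p ts => simp [lift, subst, Function.comp_def, substVar_zero_liftVar_succ]
  | and A B ihA ihB | or A B ihA ihB | imp A B ihA ihB => simp [lift, subst, ihA, ihB]
  | all A ihA | ex A ihA => simp [lift, subst, ihA]

end Formula

open Formula

lemma G_lift (A : Formula) (c : ℕ) : G (A.lift c) = (G A).lift c := by
  induction A generalizing c with
  | bot | atom => rfl
  | and A B ihA ihB | or A B ihA ihB | imp A B ihA ihB => simp [lift, G, ihA, ihB]
  | all A ihA | ex A ihA => simp [lift, G, ihA]

lemma G_subst (A : Formula) (c t : ℕ) : G (A.subst c t) = (G A).subst c t := by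
  induction A generalizing c with
  | bot | atom => rfl
  | and A B ihA ihB | or A B ihA ihB | imp A B ihA ihB => simp [subst, G, ihA, ihB]
  | all A ihA | ex A ihA => simp [subst, G, ihA]

lemma image_G_image_lift (Γ : Set Formula) :
    G '' (lift 0 '' Γ) = lift 0 '' (G '' Γ) := by
  simp [image_image, G_lift]

lemma NF_G (A : Formula) : NF (G A) := by
  induction A with
  | bot => exact .bot
  | atom p ts => exact .imp (.negAtom p ts) .bot
  | and _ _ ihA ihB => exact .and ihA ihB
  | or _ _ ihA ihB => exact .imp (.and (.imp ihA .bot) (.imp ihB .bot)) .bot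
  | imp _ _ ihA ihB => exact .imp ihA ihB
  | all _ ihA => exact .all ihA
  | ex _ ihA => exact .imp (.all (.imp ihA .bot)) .bot

namespace Prf

variable {f : Flavour} {Γ Δ : Set Formula} {A B C : Formula}

lemma mono (h : Prf f Γ A) (hΓ : Γ ⊆ Δ) : Prf f Δ A := by
  induction h generalizing Δ with
  | hyp hA => exact .hyp (hΓ hA)
  | andI _ _ ih₁ ih₂ => exact .andI (ih₁ hΓ) (ih₂ hΓ)
  | andE1 _ ih => exact .andE1 (ih hΓ)
  | andE2 _ ih => exact .andE2 (ih hΓ)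
  | orI1 _ ih => exact .orI1 (ih hΓ)
  | orI2 _ ih => exact .orI2 (ih hΓ)
  | orE _ _ _ ih ih₁ ih₂ =>
      exact .orE (ih hΓ) (ih₁ (insert_subset_insert hΓ)) (ih₂ (insert_subset_insert hΓ))
  | impI _ ih => exact .impI (ih (insert_subset_insert hΓ))
  | impE _ _ ih₁ ih₂ => exact .impE (ih₁ hΓ) (ih₂ hΓ)
  | allI _ ih => exact .allI (ih (image_mono hΓ))
  | allE t _ ih => exact .allE t (ih hΓ)
  | exI t _ ih => exact .exI t (ih hΓ)
  | exE _ _ ih ih₂ => exact .exE (ih hΓ) (ih₂ (insert_subset_insert (image_mono hΓ)))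
  | exfalso hf _ ih => exact .exfalso hf (ih hΓ)
  | dne hf _ ih => exact .dne hf (ih hΓ)

lemma weaken (h : Prf f Γ A) : Prf f (insert B Γ) A := h.mono (subset_insert _ _)

lemma hyp₀ : Prf f (insert A Γ) A := .hyp (mem_insert _ _)

lemma hyp₁ : Prf f (insert B (insert A Γ)) A := .hyp (mem_insert_of_mem _ (mem_insert _ _))

lemma weaken_under (h : Prf f (insert A Γ) C) : Prf f (insert A (insert B Γ)) C :=
  h.mono (insert_subset_insert (subset_insert _ _))

lemma clOrI1 (h : Prf f Γ A) : Prf f Γ (A.clOr B) := .impI (.impE (.andE1 hyp₀) h.weaken)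

lemma clOrI2 (h : Prf f Γ B) : Prf f Γ (A.clOr B) := .impI (.impE (.andE2 hyp₀) h.weaken)

lemma clExI (t : ℕ) (h : Prf f Γ (A.subst 0 t)) : Prf f Γ A.clEx :=
  .impI (.impE ((hyp₀ (A := all A.neg)).allE t) h.weaken)

end Prf

namespace NF

variable {f : Flavour} {Γ : Set Formula} {A B C : Formula}

open Prf in
lemma stable (hC : NF C) : Prf f Γ (C.neg.neg.imp C) := by
  induction hC generalizing Γ with
  | bot => exact .impI (.impE hyp₀ (.impI hyp₀))
  | negAtom p ts => exact .impI (.impI (.impE hyp₁ (.impI (.impE hyp₀ hyp₁))))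
  | and _ _ ihA ihB =>
      refine .impI (.andI (.impE ihA.weaken ?_) (.impE ihB.weaken ?_))
      · exact .impI (.impE hyp₁ (.impI (.impE hyp₁ (.andE1 hyp₀))))
      · exact .impI (.impE hyp₁ (.impI (.impE hyp₁ (.andE2 hyp₀))))
  | imp _ _ _ ihB =>
      refine .impI (.impI (.impE ihB.weaken.weaken ?_))
      exact .impI (.impE hyp₁.weaken (.impI (.impE hyp₁ (.impE hyp₀ hyp₁.weaken))))
  | @all A _ ihA =>
      refine .impI (.allI ?_)
      rw [image_insert_eq]
      refine .impE ihA (.impI (.impE hyp₁ (.impI (.impE hyp₁ ?_))))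
      simpa only [subst_zero_lift_succ] using (hyp₀ (A := (Formula.all A).lift 0)).allE 0

lemma of_neg_neg (hC : NF C) (h : Prf f Γ C.neg.neg) : Prf f Γ C := .impE hC.stable h

lemma of_bot (hC : NF C) (h : Prf f Γ .bot) : Prf f Γ C := hC.of_neg_neg (.impI h.weaken)

open Prf in
lemma clOrE (hC : NF C) (h : Prf f Γ (A.clOr B)) (hA : Prf f (insert A Γ) C)
    (hB : Prf f (insert B Γ) C) : Prf f Γ C :=
  hC.of_neg_neg <| .impI <| .impE h.weaken <|
    .andI (.impI (.impE hyp₁ hA.weaken_under)) (.impI (.impE hyp₁ hB.weaken_under))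

open Prf in
lemma clExE (hC : NF C) (h : Prf f Γ A.clEx) (hA : Prf f (insert A (lift 0 '' Γ)) (C.lift 0)) :
    Prf f Γ C := by
  refine hC.of_neg_neg (.impI (.impE h.weaken (.allI ?_)))
  rw [image_insert_eq, lift_neg]
  exact .impI (.impE hyp₁ hA.weaken_under)

end NF

/-- Soundness of the Gödel–Gentzen translation into minimal logic:
if CL + Γ ⊢ A then ML + G(Γ) ⊢ G(A). -/
theorem G_soundness (Γ : Set Formula) (A : Formula) (h : Prf Flavour.cl Γ A) :
    Prf Flavour.min (G '' Γ) (G A) := by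
  induction h with
  | hyp hA => exact .hyp (mem_image_of_mem G hA)
  | andI _ _ ih₁ ih₂ => exact .andI ih₁ ih₂
  | andE1 _ ih => exact .andE1 ih
  | andE2 _ ih => exact .andE2 ih
  | orI1 _ ih => exact .clOrI1 ih
  | orI2 _ ih => exact .clOrI2 ih
  | orE _ _ _ ih ih₁ ih₂ =>
      rw [image_insert_eq] at ih₁ ih₂
      exact (NF_G _).clOrE ih ih₁ ih₂
  | impI _ ih => exact .impI (by rwa [image_insert_eq] at ih)
  | impE _ _ ih₁ ih₂ => exact .impE ih₁ ih₂
  | allI _ ih => exact .allI (by rwa [image_G_image_lift] at ih)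
  | allE t _ ih => exact G_subst .. ▸ .allE t ih
  | exI t _ ih => exact .clExI t (by rwa [G_subst] at ih)
  | exE _ _ ih ih₂ =>
      rw [image_insert_eq, image_G_image_lift, G_lift] at ih₂
      exact (NF_G _).clExE ih ih₂
  | exfalso _ _ ih => exact (NF_G _).of_bot ih
  | dne _ _ ih => exact (NF_G _).of_neg_neg ih
end

section
/- If CL ⊢ ¬F but IL ⊬ ¬F, then the translations N₁(A) = G(A) ∨ F and N₂(A) = G(A)[F/⊥] are not equivalent in intuitionistic logic: for some formula A (one may take a fresh propositional atom Q), IL ⊬ N₂(Q) → N₁(Q), i.e., IL ⊬ ((Q → F) → F) → (¬¬Q ∨ F). -/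
/-- Iterated lifting (adjusting a formula to sit under `n` binders). -/
def liftN : ℕ → Formula → Formula
  | 0, A => A
  | n+1, A => Formula.lift 0 (liftN n A)

/-- Substitute the formula `F` for every occurrence of ⊥ (written A[F/⊥]). -/
def substBot (F : Formula) : ℕ → Formula → Formula
  | d, .bot => liftN d F
  | _, .atom p ts => .atom p ts
  | d, .and A B => .and (substBot F d A) (substBot F d B)
  | d, .or A B => .or (substBot F d A) (substBot F d B)
  | d, .imp A B => .imp (substBot F d A) (substBot F d B)
  | d, .all A => .all (substBot F (d+1) A)
  | d, .ex A => .ex (substBot F (d+1) A)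

/-- The translation N₂(A) = G(A)[F/⊥]. -/
def N2 (F A : Formula) : Formula := substBot F 0 (G A)

/-- The translation N₁(A) = G(A) ∨ F. -/
def N1 (F A : Formula) : Formula := (G A).or F

/-- The predicate symbol `q` occurs in the formula. -/
def hasPred (q : ℕ) : Formula → Prop
  | .bot => False
  | .atom p _ => p = q
  | .and A B => hasPred q A ∨ hasPred q B
  | .or A B => hasPred q A ∨ hasPred q B
  | .imp A B => hasPred q A ∨ hasPred q B
  | .all A => hasPred q A
  | .ex A => hasPred q A

/-! ### Auxiliary: simultaneous renaming of variables -/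

namespace Aux
open Formula

/-- Lift a variable renaming under one binder. -/
def up (σ : ℕ → ℕ) : ℕ → ℕ
  | 0 => 0
  | v+1 => σ v + 1

/-- Simultaneous renaming of free variables. -/
def ren (σ : ℕ → ℕ) : Formula → Formula
  | .bot => .bot
  | .atom p ts => .atom p (ts.map σ)
  | .and A B => .and (ren σ A) (ren σ B)
  | .or A B => .or (ren σ A) (ren σ B)
  | .imp A B => .imp (ren σ A) (ren σ B)
  | .all A => .all (ren (up σ) A)
  | .ex A => .ex (ren (up σ) A)

theorem ren_congr {σ τ : ℕ → ℕ} (h : ∀ v, σ v = τ v) : ∀ A, ren σ A = ren τ A := by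
  intro A
  induction A generalizing σ τ with
  | bot => rfl
  | atom p ts => simp [ren]; exact fun v _ => h v
  | and A B ihA ihB => simp [ren, ihA h, ihB h]
  | or A B ihA ihB => simp [ren, ihA h, ihB h]
  | imp A B ihA ihB => simp [ren, ihA h, ihB h]
  | all A ih =>
      simp [ren]; apply ih; intro v; cases v with
      | zero => rfl
      | succ v => simp [up, h v]
  | ex A ih =>
      simp [ren]; apply ih; intro v; cases v with
      | zero => rfl
      | succ v => simp [up, h v]

theorem ren_ren (σ τ : ℕ → ℕ) : ∀ A, ren σ (ren τ A) = ren (σ ∘ τ) A := by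
  intro A
  induction A generalizing σ τ with
  | bot => rfl
  | atom p ts => simp [ren, List.map_map]
  | and A B ihA ihB => simp [ren, ihA, ihB]
  | or A B ihA ihB => simp [ren, ihA, ihB]
  | imp A B ihA ihB => simp [ren, ihA, ihB]
  | all A ih =>
      simp [ren, ih]
      apply ren_congr; intro v; cases v with
      | zero => rfl
      | succ v => simp [up, Function.comp]
  | ex A ih =>
      simp [ren, ih]
      apply ren_congr; intro v; cases v with
      | zero => rfl
      | succ v => simp [up, Function.comp]

theorem ren_id : ∀ A, ren id A = A := by
  intro A
  induction A with
  | bot => rfl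
  | atom p ts => simp [ren]
  | and A B ihA ihB => simp [ren, ihA, ihB]
  | or A B ihA ihB => simp [ren, ihA, ihB]
  | imp A B ihA ihB => simp [ren, ihA, ihB]
  | all A ih =>
      simp [ren]
      rw [ren_congr (τ := id)]
      · exact ih
      · intro v; cases v <;> simp [up]
  | ex A ih =>
      simp [ren]
      rw [ren_congr (τ := id)]
      · exact ih
      · intro v; cases v <;> simp [up]

theorem up_liftVar (c : ℕ) : ∀ v, up (liftVar c) v = liftVar (c+1) v := by
  intro v; cases v with
  | zero => simp [up, liftVar]
  | succ v =>
      simp only [up, liftVar]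
      by_cases h : v < c
      · simp [h, Nat.succ_lt_succ h]
      · simp [h, fun hh => h (Nat.lt_of_succ_lt_succ hh)]

theorem up_substVar (c t : ℕ) : ∀ v, up (substVar c t) v = substVar (c+1) t v := by
  intro v; cases v with
  | zero => simp [up, substVar]
  | succ v =>
      simp only [up, substVar]
      split_ifs <;> omega

theorem lift_eq_ren (c : ℕ) (A : Formula) : Formula.lift c A = ren (liftVar c) A := by
  induction A generalizing c with
  | bot => rfl
  | atom p ts => rfl
  | and A B ihA ihB => simp [Formula.lift, ren, ihA, ihB]
  | or A B ihA ihB => simp [Formula.lift, ren, ihA, ihB]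
  | imp A B ihA ihB => simp [Formula.lift, ren, ihA, ihB]
  | all A ih => simp [Formula.lift, ren, ih]; exact ren_congr (fun v => (up_liftVar c v).symm) A
  | ex A ih => simp [Formula.lift, ren, ih]; exact ren_congr (fun v => (up_liftVar c v).symm) A

theorem subst_eq_ren (c t : ℕ) (A : Formula) : Formula.subst c t A = ren (substVar c t) A := by
  induction A generalizing c with
  | bot => rfl
  | atom p ts => rfl
  | and A B ihA ihB => simp [Formula.subst, ren, ihA, ihB]
  | or A B ihA ihB => simp [Formula.subst, ren, ihA, ihB]
  | imp A B ihA ihB => simp [Formula.subst, ren, ihA, ihB]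
  | all A ih => simp [Formula.subst, ren, ih]; exact ren_congr (fun v => (up_substVar c t v).symm) A
  | ex A ih => simp [Formula.subst, ren, ih]; exact ren_congr (fun v => (up_substVar c t v).symm) A

/-- All free variables are `< k`. -/
def fvLt : ℕ → Formula → Prop
  | _, .bot => True
  | k, .atom _ ts => ∀ v ∈ ts, v < k
  | k, .and A B => fvLt k A ∧ fvLt k B
  | k, .or A B => fvLt k A ∧ fvLt k B
  | k, .imp A B => fvLt k A ∧ fvLt k B
  | k, .all A => fvLt (k+1) A
  | k, .ex A => fvLt (k+1) A

theorem fvLt_mono {k k' : ℕ} (h : k ≤ k') : ∀ A, fvLt k A → fvLt k' A := by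
  intro A
  induction A generalizing k k' with
  | bot => intro _; trivial
  | atom p ts => intro hA v hv; exact lt_of_lt_of_le (hA v hv) h
  | and A B ihA ihB => exact fun hA => ⟨ihA h hA.1, ihB h hA.2⟩
  | or A B ihA ihB => exact fun hA => ⟨ihA h hA.1, ihB h hA.2⟩
  | imp A B ihA ihB => exact fun hA => ⟨ihA h hA.1, ihB h hA.2⟩
  | all A ih => exact fun hA => ih (Nat.succ_le_succ h) hA
  | ex A ih => exact fun hA => ih (Nat.succ_le_succ h) hA

theorem fvLt_exists : ∀ A, ∃ k, fvLt k A := by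
  intro A
  induction A with
  | bot => exact ⟨0, trivial⟩
  | atom p ts =>
      refine ⟨ts.foldr max 0 + 1, ?_⟩
      have key : ∀ (l : List ℕ), ∀ v ∈ l, v ≤ l.foldr max 0 := by
        intro l
        induction l with
        | nil => intro v hv; cases hv
        | cons a l ih =>
            intro v hv
            rcases List.mem_cons.mp hv with h | h
            · simp [List.foldr, h]
            · have := ih v h
              simp [List.foldr]; omega
      intro v hv
      have := key ts v hv
      omega
  | and A B ihA ihB =>
      obtain ⟨k1, h1⟩ := ihA; obtain ⟨k2, h2⟩ := ihB
      exact ⟨max k1 k2, fvLt_mono (le_max_left _ _) _ h1, fvLt_mono (le_max_right _ _) _ h2⟩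
  | or A B ihA ihB =>
      obtain ⟨k1, h1⟩ := ihA; obtain ⟨k2, h2⟩ := ihB
      exact ⟨max k1 k2, fvLt_mono (le_max_left _ _) _ h1, fvLt_mono (le_max_right _ _) _ h2⟩
  | imp A B ihA ihB =>
      obtain ⟨k1, h1⟩ := ihA; obtain ⟨k2, h2⟩ := ihB
      exact ⟨max k1 k2, fvLt_mono (le_max_left _ _) _ h1, fvLt_mono (le_max_right _ _) _ h2⟩
  | all A ih => obtain ⟨k, h⟩ := ih; exact ⟨k, fvLt_mono (Nat.le_succ k) _ h⟩
  | ex A ih => obtain ⟨k, h⟩ := ih; exact ⟨k, fvLt_mono (Nat.le_succ k) _ h⟩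

theorem ren_congr_fv {k : ℕ} {σ τ : ℕ → ℕ} :
    ∀ A, fvLt k A → (∀ v < k, σ v = τ v) → ren σ A = ren τ A := by
  intro A
  induction A generalizing k σ τ with
  | bot => intro _ _; rfl
  | atom p ts => intro hA h; simp [ren]; exact fun v hv => h v (hA v hv)
  | and A B ihA ihB => intro hA h; simp [ren, ihA hA.1 h, ihB hA.2 h]
  | or A B ihA ihB => intro hA h; simp [ren, ihA hA.1 h, ihB hA.2 h]
  | imp A B ihA ihB => intro hA h; simp [ren, ihA hA.1 h, ihB hA.2 h]
  | all A ih =>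
      intro hA h; simp [ren]
      apply ih hA
      intro v hv; cases v with
      | zero => rfl
      | succ v => simp [up, h v (Nat.lt_of_succ_lt_succ hv)]
  | ex A ih =>
      intro hA h; simp [ren]
      apply ih hA
      intro v hv; cases v with
      | zero => rfl
      | succ v => simp [up, h v (Nat.lt_of_succ_lt_succ hv)]

end Aux


namespace Aux
open Formula

theorem Prf_weak {f : Flavour} {Γ Δ : Set Formula} {A : Formula}
    (h : Prf f Γ A) : Γ ⊆ Δ → Prf f Δ A := by
  induction h generalizing Δ with
  | hyp hm => exact fun hs => Prf.hyp (hs hm)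
  | andI _ _ ih1 ih2 => exact fun hs => Prf.andI (ih1 hs) (ih2 hs)
  | andE1 _ ih => exact fun hs => Prf.andE1 (ih hs)
  | andE2 _ ih => exact fun hs => Prf.andE2 (ih hs)
  | orI1 _ ih => exact fun hs => Prf.orI1 (ih hs)
  | orI2 _ ih => exact fun hs => Prf.orI2 (ih hs)
  | orE _ _ _ ih ih1 ih2 =>
      exact fun hs => Prf.orE (ih hs) (ih1 (Set.insert_subset_insert hs))
        (ih2 (Set.insert_subset_insert hs))
  | impI _ ih => exact fun hs => Prf.impI (ih (Set.insert_subset_insert hs))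
  | impE _ _ ih1 ih2 => exact fun hs => Prf.impE (ih1 hs) (ih2 hs)
  | allI _ ih => exact fun hs => Prf.allI (ih (Set.image_mono hs))
  | allE t _ ih => exact fun hs => Prf.allE t (ih hs)
  | exI t _ ih => exact fun hs => Prf.exI t (ih hs)
  | exE _ _ ih1 ih2 =>
      exact fun hs => Prf.exE (ih1 hs)
        (ih2 (Set.insert_subset_insert (Set.image_mono hs)))
  | exfalso hf _ ih => exact fun hs => Prf.exfalso hf (ih hs)
  | dne hf _ ih => exact fun hs => Prf.dne hf (ih hs)

theorem Prf_cut {f : Flavour} {Γ : Set Formula} {A B : Formula}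
    (h1 : Prf f Γ A) (h2 : Prf f (insert A Γ) B) : Prf f Γ B :=
  Prf.impE (Prf.impI h2) h1

theorem ren_lift0 (σ : ℕ → ℕ) (B : Formula) :
    ren (up σ) (Formula.lift 0 B) = Formula.lift 0 (ren σ B) := by
  rw [lift_eq_ren, lift_eq_ren, ren_ren, ren_ren]
  apply ren_congr
  intro v
  simp [Function.comp, liftVar, up]

theorem ren_subst0 (σ : ℕ → ℕ) (t : ℕ) (A : Formula) :
    ren σ (Formula.subst 0 t A) = Formula.subst 0 (σ t) (ren (up σ) A) := by
  rw [subst_eq_ren, subst_eq_ren, ren_ren, ren_ren]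
  apply ren_congr
  intro v
  cases v with
  | zero => simp [Function.comp, substVar, up]
  | succ v => simp [Function.comp, substVar, up]

theorem image_lift_ren (σ : ℕ → ℕ) (Γ : Set Formula) :
    Formula.lift 0 '' (ren σ '' Γ) = ren (up σ) '' (Formula.lift 0 '' Γ) := by
  rw [Set.image_image, Set.image_image]
  apply Set.image_congr
  intro B _
  exact (ren_lift0 σ B).symm

theorem Prf_ren {f : Flavour} {Γ : Set Formula} {A : Formula}
    (h : Prf f Γ A) : ∀ σ : ℕ → ℕ, Prf f (ren σ '' Γ) (ren σ A) := by
  induction h with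
  | hyp hm => exact fun σ => Prf.hyp (Set.mem_image_of_mem _ hm)
  | andI _ _ ih1 ih2 => exact fun σ => Prf.andI (ih1 σ) (ih2 σ)
  | andE1 _ ih => exact fun σ => Prf.andE1 (ih σ)
  | andE2 _ ih => exact fun σ => Prf.andE2 (ih σ)
  | orI1 _ ih => exact fun σ => Prf.orI1 (ih σ)
  | orI2 _ ih => exact fun σ => Prf.orI2 (ih σ)
  | orE _ _ _ ih ih1 ih2 =>
      intro σ
      refine Prf.orE (ih σ) ?_ ?_
      · have := ih1 σ; rwa [Set.image_insert_eq] at this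
      · have := ih2 σ; rwa [Set.image_insert_eq] at this
  | impI _ ih =>
      intro σ
      refine Prf.impI ?_
      have := ih σ; rwa [Set.image_insert_eq] at this
  | impE _ _ ih1 ih2 => exact fun σ => Prf.impE (ih1 σ) (ih2 σ)
  | allI _ ih =>
      intro σ
      refine Prf.allI ?_
      rw [image_lift_ren]
      exact ih (up σ)
  | allE t _ ih =>
      intro σ
      have := Prf.allE (σ t) (ih σ)
      rwa [show ren σ (Formula.subst 0 t _) = Formula.subst 0 (σ t) (ren (up σ) _) from ren_subst0 σ t _]
  | exI t _ ih =>
      intro σ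
      refine Prf.exI (σ t) ?_
      have := ih σ
      rwa [ren_subst0] at this
  | exE _ _ ih1 ih2 =>
      intro σ
      refine Prf.exE (ih1 σ) ?_
      have := ih2 (up σ)
      rw [Set.image_insert_eq, ← image_lift_ren σ] at this
      rwa [ren_lift0] at this
  | exfalso hf _ ih => exact fun σ => Prf.exfalso hf (ih σ)
  | dne hf _ ih => exact fun σ => Prf.dne hf (ih σ)

/-- The renaming used for generalization over a fresh variable `d`. -/
def swp (d : ℕ) : ℕ → ℕ := fun v => if v = d then 0 else v + 1

theorem swp_ren_eq_lift {d : ℕ} {z : Formula} (hz : fvLt d z) :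
    ren (swp d) z = Formula.lift 0 z := by
  rw [lift_eq_ren]
  exact ren_congr_fv z hz (fun v hv => by simp [swp, liftVar, Nat.ne_of_lt hv])

theorem swp_ren_subst {d : ℕ} {A : Formula} (hA : fvLt (d+1) A) :
    ren (swp d) (Formula.subst 0 d A) = A := by
  rw [subst_eq_ren, ren_ren]
  rw [ren_congr_fv A hA (σ := swp d ∘ substVar 0 d) (τ := id)]
  · exact ren_id A
  · intro v hv
    cases v with
    | zero => simp [Function.comp, substVar, swp]
    | succ v =>
        have : v ≠ d := by omega
        simp [Function.comp, substVar, swp, this]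

end Aux


namespace Aux
open Formula

/-- A complete-lattice model: an adjoint implication plus an interpretation
of predicates, over constant domain `D`. -/
structure Mdl (H : Type*) (D : Type*) [CompleteLattice H] where
  him : H → H → H
  adj : ∀ a b c : H, c ≤ him a b ↔ c ⊓ a ≤ b
  I : ℕ → List D → H

variable {H : Type*} {H' : Type*} {D : Type*} [CompleteLattice H] [CompleteLattice H']

def envCons (d : D) (ρ : ℕ → D) : ℕ → D
  | 0 => d
  | v+1 => ρ v

def Mdl.eval (M : Mdl H D) : (ℕ → D) → Formula → H
  | _, .bot => ⊥
  | ρ, .atom p ts => M.I p (ts.map ρ)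
  | ρ, .and A B => M.eval ρ A ⊓ M.eval ρ B
  | ρ, .or A B => M.eval ρ A ⊔ M.eval ρ B
  | ρ, .imp A B => M.him (M.eval ρ A) (M.eval ρ B)
  | ρ, .all A => ⨅ d : D, M.eval (envCons d ρ) A
  | ρ, .ex A => ⨆ d : D, M.eval (envCons d ρ) A

theorem Mdl.him_eq_top (M : Mdl H D) {a b : H} (h : a ≤ b) : M.him a b = ⊤ :=
  top_le_iff.mp ((M.adj a b ⊤).mpr (le_trans inf_le_right h))

theorem Mdl.him_top (M : Mdl H D) (b : H) : M.him ⊤ b = b := by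
  apply le_antisymm
  · have := (M.adj ⊤ b (M.him ⊤ b)).mp le_rfl
    simpa using this
  · rw [M.adj]; simp

theorem Mdl.him_top_bot (M : Mdl H D) : M.him ⊤ (⊥ : H) = ⊥ := M.him_top ⊥

theorem Mdl.mp (M : Mdl H D) (a b : H) : M.him a b ⊓ a ≤ b :=
  (M.adj a b (M.him a b)).mp le_rfl

theorem Mdl.inf_iSup_le (M : Mdl H D) {ι : Sort*} (a : H) (g : ι → H) :
    a ⊓ ⨆ i, g i ≤ ⨆ i, a ⊓ g i := by
  have : (⨆ i, g i) ≤ M.him a (⨆ i, a ⊓ g i) := by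
    apply iSup_le
    intro i
    rw [M.adj]
    rw [inf_comm]
    exact le_iSup (fun i => a ⊓ g i) i
  have := (M.adj _ _ _).mp this
  calc a ⊓ ⨆ i, g i = (⨆ i, g i) ⊓ a := inf_comm _ _
    _ ≤ _ := this

theorem Mdl.inf_sup_le (M : Mdl H D) (a b c : H) : a ⊓ (b ⊔ c) ≤ (a ⊓ b) ⊔ (a ⊓ c) := by
  have : b ⊔ c ≤ M.him a ((a ⊓ b) ⊔ (a ⊓ c)) := by
    apply sup_le <;> rw [M.adj, inf_comm]
    · exact le_sup_left
    · exact le_sup_right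
  have := (M.adj _ _ _).mp this
  calc a ⊓ (b ⊔ c) = (b ⊔ c) ⊓ a := inf_comm _ _
    _ ≤ _ := this

theorem eval_ren (M : Mdl H D) (σ : ℕ → ℕ) :
    ∀ A (ρ : ℕ → D), M.eval ρ (ren σ A) = M.eval (ρ ∘ σ) A := by
  intro A
  induction A generalizing σ with
  | bot => intro ρ; rfl
  | atom p ts => intro ρ; simp [ren, Mdl.eval, List.map_map]
  | and A B ihA ihB => intro ρ; simp [ren, Mdl.eval, ihA, ihB]
  | or A B ihA ihB => intro ρ; simp [ren, Mdl.eval, ihA, ihB]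
  | imp A B ihA ihB => intro ρ; simp [ren, Mdl.eval, ihA, ihB]
  | all A ih =>
      intro ρ
      simp only [ren, Mdl.eval]
      apply iInf_congr
      intro d
      rw [ih (up σ)]
      congr 1
      funext v
      cases v <;> simp [envCons, up, Function.comp]
  | ex A ih =>
      intro ρ
      simp only [ren, Mdl.eval]
      apply iSup_congr
      intro d
      rw [ih (up σ)]
      congr 1
      funext v
      cases v <;> simp [envCons, up, Function.comp]

theorem eval_lift0 (M : Mdl H D) (B : Formula) (d : D) (ρ : ℕ → D) :
    M.eval (envCons d ρ) (Formula.lift 0 B) = M.eval ρ B := by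
  rw [lift_eq_ren, eval_ren]
  have h : (envCons d ρ) ∘ (liftVar 0) = ρ := by
    funext v; simp [Function.comp, liftVar, envCons]
  rw [h]

theorem eval_subst0 (M : Mdl H D) (A : Formula) (t : ℕ) (ρ : ℕ → D) :
    M.eval ρ (Formula.subst 0 t A) = M.eval (envCons (ρ t) ρ) A := by
  rw [subst_eq_ren, eval_ren]
  have h : ρ ∘ (substVar 0 t) = envCons (ρ t) ρ := by
    funext v
    cases v with
    | zero => simp [Function.comp, substVar, envCons]
    | succ v => simp [Function.comp, substVar, envCons]
  rw [h]

theorem sound {f : Flavour} {Γ : Set Formula} {A : Formula} (M : Mdl H D)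
    (hcl : f = Flavour.cl → ∀ a c : H, c ≤ M.him (M.him a ⊥) ⊥ → c ≤ a)
    (h : Prf f Γ A) :
    ∀ (ρ : ℕ → D) (c : H), (∀ B ∈ Γ, c ≤ M.eval ρ B) → c ≤ M.eval ρ A := by
  induction h with
  | hyp hm => exact fun ρ c hc => hc _ hm
  | andI _ _ ih1 ih2 => exact fun ρ c hc => le_inf (ih1 ρ c hc) (ih2 ρ c hc)
  | andE1 _ ih => exact fun ρ c hc => le_trans (ih ρ c hc) inf_le_left
  | andE2 _ ih => exact fun ρ c hc => le_trans (ih ρ c hc) inf_le_right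
  | orI1 _ ih => exact fun ρ c hc => le_trans (ih ρ c hc) le_sup_left
  | orI2 _ ih => exact fun ρ c hc => le_trans (ih ρ c hc) le_sup_right
  | orE _ _ _ ih ih1 ih2 =>
      intro ρ c hc
      have h1 : c ⊓ M.eval ρ _ ≤ M.eval ρ _ := ih1 ρ _ (by
        intro B hB
        rcases hB with rfl | hB
        · exact inf_le_right
        · exact le_trans inf_le_left (hc B hB))
      have h2 : c ⊓ M.eval ρ _ ≤ M.eval ρ _ := ih2 ρ _ (by
        intro B hB
        rcases hB with rfl | hB
        · exact inf_le_right
        · exact le_trans inf_le_left (hc B hB))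
      calc c ≤ c ⊓ (M.eval ρ _ ⊔ M.eval ρ _) := le_inf le_rfl (ih ρ c hc)
        _ ≤ _ ⊔ _ := M.inf_sup_le _ _ _
        _ ≤ _ := sup_le h1 h2
  | impI _ ih =>
      intro ρ c hc
      simp only [Mdl.eval]
      rw [M.adj]
      apply ih ρ
      intro B hB
      rcases hB with rfl | hB
      · exact inf_le_right
      · exact le_trans inf_le_left (hc B hB)
  | impE _ _ ih1 ih2 =>
      intro ρ c hc
      calc c ≤ M.him (M.eval ρ _) (M.eval ρ _) ⊓ M.eval ρ _ := le_inf (ih1 ρ c hc) (ih2 ρ c hc)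
        _ ≤ _ := M.mp _ _
  | allI _ ih =>
      intro ρ c hc
      apply le_iInf
      intro d
      apply ih (envCons d ρ)
      rintro B ⟨B₀, hB₀, rfl⟩
      rw [eval_lift0]
      exact hc B₀ hB₀
  | allE t _ ih =>
      intro ρ c hc
      rw [eval_subst0]
      exact le_trans (ih ρ c hc) (iInf_le _ (ρ t))
  | exI t _ ih =>
      intro ρ c hc
      have := ih ρ c hc
      rw [eval_subst0] at this
      simp only [Mdl.eval]
      apply le_trans this
      exact le_iSup (fun d => M.eval (envCons d ρ) _) (ρ t)
  | @exE Γp Ap Bp _ _ ih1 ih2 =>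
      intro ρ c hc
      have key : ∀ d : D, c ⊓ M.eval (envCons d ρ) Ap ≤ M.eval ρ Bp := by
        intro d
        have := ih2 (envCons d ρ) (c ⊓ M.eval (envCons d ρ) _) (by
          intro B hB
          rcases hB with rfl | ⟨B₀, hB₀, rfl⟩
          · exact inf_le_right
          · rw [eval_lift0]
            exact le_trans inf_le_left (hc B₀ hB₀))
        rwa [eval_lift0] at this
      calc c ≤ c ⊓ ⨆ d : D, M.eval (envCons d ρ) _ := le_inf le_rfl (ih1 ρ c hc)
        _ ≤ ⨆ d : D, c ⊓ M.eval (envCons d ρ) _ := M.inf_iSup_le _ _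
        _ ≤ _ := iSup_le key
  | exfalso hf _ ih =>
      intro ρ c hc
      exact le_trans (ih ρ c hc) bot_le
  | dne hf _ ih =>
      intro ρ c hc
      exact hcl hf _ c (ih ρ c hc)

theorem eval_hom (M : Mdl H D) (M' : Mdl H' D) (h : H → H')
    (hbot : h ⊥ = ⊥)
    (hinf : ∀ a b, h (a ⊓ b) = h a ⊓ h b)
    (hsup : ∀ a b, h (a ⊔ b) = h a ⊔ h b)
    (hiInf : ∀ g : D → H, h (⨅ d, g d) = ⨅ d, h (g d))
    (hiSup : ∀ g : D → H, h (⨆ d, g d) = ⨆ d, h (g d))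
    (hhim : ∀ a b, h (M.him a b) = M'.him (h a) (h b))
    (hI : ∀ p ts, h (M.I p ts) = M'.I p ts) :
    ∀ A (ρ : ℕ → D), h (M.eval ρ A) = M'.eval ρ A := by
  intro A
  induction A with
  | bot => intro ρ; exact hbot
  | atom p ts => intro ρ; exact hI p _
  | and A B ihA ihB => intro ρ; simp [Mdl.eval, hinf, ihA, ihB]
  | or A B ihA ihB => intro ρ; simp [Mdl.eval, hsup, ihA, ihB]
  | imp A B ihA ihB => intro ρ; simp [Mdl.eval, hhim, ihA, ihB]
  | all A ih => intro ρ; simp [Mdl.eval, hiInf, ih]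
  | ex A ih => intro ρ; simp [Mdl.eval, hiSup, ih]

end Aux


namespace Aux
open Formula

section Lindenbaum

variable (F : Formula)

/-- Lindenbaum preorder relative to the theory `{F}`. -/
def Pre (A B : Formula) : Prop := Prf Flavour.int (insert A {F}) B

theorem pre_refl (A : Formula) : Pre F A A := Prf.hyp (Set.mem_insert _ _)

theorem pre_trans {A B C : Formula} (h1 : Pre F A B) (h2 : Pre F B C) : Pre F A C :=
  Prf_cut h1 (Prf_weak h2 (Set.insert_subset_insert (Set.subset_insert _ _)))

def ub (S : Set Formula) : Set Formula := {C | ∀ A ∈ S, Pre F A C}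
def lb (S : Set Formula) : Set Formula := {C | ∀ A ∈ S, Pre F C A}

theorem ub_anti {S T : Set Formula} (h : S ⊆ T) : ub F T ⊆ ub F S :=
  fun _ hC A hA => hC A (h hA)

theorem lb_anti {S T : Set Formula} (h : S ⊆ T) : lb F T ⊆ lb F S :=
  fun _ hC A hA => hC A (h hA)

/-- The MacNeille completion of the Lindenbaum preorder. -/
def Lnd := {U : Set Formula // lb F (ub F U) ⊆ U}

instance : PartialOrder (Lnd F) :=
  { le := fun U V => U.1 ⊆ V.1
    le_refl := fun U => subset_rfl
    le_trans := fun U V W h1 h2 => fun x hx => h2 (h1 hx)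
    le_antisymm := fun U V h1 h2 => Subtype.ext (Set.Subset.antisymm h1 h2) }

theorem Lnd.le_def {U V : Lnd F} : U ≤ V ↔ U.1 ⊆ V.1 := ⟨fun h => h, fun h => h⟩

theorem Lnd.down {U : Lnd F} {z B : Formula} (h : Pre F z B) (hB : B ∈ U.1) : z ∈ U.1 :=
  U.2 (fun A hA => pre_trans F h (hA B hB))

instance : InfSet (Lnd F) :=
  ⟨fun S => ⟨⋂ U ∈ S, (U : Lnd F).1, by
    intro z hz
    apply Set.mem_iInter₂.mpr
    intro U hU
    apply U.2
    have h1 : (⋂ V ∈ S, (V : Lnd F).1) ⊆ U.1 := Set.biInter_subset_of_mem hU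
    exact (lb_anti F (ub_anti F h1)) hz⟩⟩

theorem Lnd.isGLB (S : Set (Lnd F)) : IsGLB S (sInf S) := by
  constructor
  · intro U hU
    exact (Lnd.le_def F).mpr (Set.biInter_subset_of_mem hU)
  · intro V hV
    exact (Lnd.le_def F).mpr (Set.subset_iInter₂ (fun U hU => (Lnd.le_def F).mp (hV hU)))

instance : CompleteLattice (Lnd F) := completeLatticeOfInf _ (Lnd.isGLB F)

def iota (A : Formula) : Lnd F :=
  ⟨{B | Pre F B A}, fun z hz => hz A (fun B hB => hB)⟩

theorem mem_iota {A B : Formula} : B ∈ (iota F A).1 ↔ Pre F B A := Iff.rfl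

theorem iota_le_iff {A : Formula} {U : Lnd F} : iota F A ≤ U ↔ A ∈ U.1 := by
  rw [Lnd.le_def]
  constructor
  · intro h; exact h (pre_refl F A)
  · intro h B hB; exact Lnd.down F hB h

theorem iota_mono {A B : Formula} (h : Pre F A B) : iota F A ≤ iota F B :=
  (Lnd.le_def F).mpr (fun C hC => pre_trans F hC h)

theorem mem_inf {U V : Lnd F} {z : Formula} : z ∈ (U ⊓ V).1 ↔ z ∈ U.1 ∧ z ∈ V.1 := by
  rw [← iota_le_iff, le_inf_iff, iota_le_iff, iota_le_iff]

theorem mem_iInf {ι : Sort*} {f : ι → Lnd F} {z : Formula} :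
    z ∈ (⨅ i, f i).1 ↔ ∀ i, z ∈ (f i).1 := by
  rw [← iota_le_iff, le_iInf_iff]
  exact forall_congr' (fun i => iota_le_iff F)

theorem iota_F_eq_top : iota F F = ⊤ := by
  apply le_antisymm le_top
  rw [Lnd.le_def]
  intro z _
  exact Prf.hyp (Set.mem_insert_of_mem _ rfl)

theorem iota_bot_eq_bot : iota F Formula.bot = (⊥ : Lnd F) := by
  apply le_antisymm _ bot_le
  rw [show (⊥ : Lnd F) = sInf Set.univ from sInf_univ.symm]
  apply le_sInf
  intro U _
  rw [Lnd.le_def]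
  intro z hz
  apply U.2
  intro y _
  exact Prf.exfalso (by decide) hz

theorem iota_and {X Y : Formula} : iota F (X.and Y) = iota F X ⊓ iota F Y := by
  apply Subtype.ext
  ext z
  show Pre F z (X.and Y) ↔ z ∈ (iota F X ⊓ iota F Y).1
  rw [mem_inf]
  constructor
  · intro h
    exact ⟨pre_trans F h (Prf.andE1 (pre_refl F _)), pre_trans F h (Prf.andE2 (pre_refl F _))⟩
  · rintro ⟨h1, h2⟩
    exact Prf.andI h1 h2

theorem iota_or {X Y : Formula} : iota F (X.or Y) = iota F X ⊔ iota F Y := by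
  apply le_antisymm
  · rw [Lnd.le_def]
    intro z hz
    apply (iota F X ⊔ iota F Y).2
    intro y hy
    have hX : Pre F X y := hy X ((iota_le_iff F).mp (le_sup_left (b := iota F Y)) )
    have hY : Pre F Y y := hy Y ((iota_le_iff F).mp (le_sup_right (a := iota F X)))
    refine Prf.orE hz ?_ ?_
    · exact Prf_weak hX (Set.insert_subset_insert (Set.subset_insert _ _))
    · exact Prf_weak hY (Set.insert_subset_insert (Set.subset_insert _ _))
  · exact sup_le (iota_mono F (Prf.orI1 (pre_refl F X))) (iota_mono F (Prf.orI2 (pre_refl F Y)))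

/-- Heyting implication on the completion. -/
def him1 (U V : Lnd F) : Lnd F :=
  ⟨{C | ∀ B ∈ U.1, (C.and B) ∈ V.1}, by
    intro z hz B hB
    apply V.2
    intro y hy
    have hw : (B.imp y) ∈ ub F {C | ∀ B ∈ U.1, (C.and B) ∈ V.1} := by
      intro C hC
      refine Prf.impI ?_
      have h1 : Pre F (C.and B) y := hy _ (hC B hB)
      have h2 : Prf Flavour.int (insert B (insert C {F})) (C.and B) :=
        Prf.andI (Prf.hyp (Set.mem_insert_of_mem _ (Set.mem_insert _ _))) (Prf.hyp (Set.mem_insert _ _))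
      exact Prf_cut h2 (Prf_weak h1 (Set.insert_subset_insert
        (Set.subset_insert _ _ |>.trans (Set.subset_insert _ _))))
    have hzBy : Pre F z (B.imp y) := hz _ hw
    -- z ∧ B ≼ y
    have hzB : Prf Flavour.int (insert (z.and B) {F}) z := Prf.andE1 (pre_refl F _)
    have hB' : Prf Flavour.int (insert (z.and B) {F}) B := Prf.andE2 (pre_refl F _)
    have himp : Prf Flavour.int (insert (z.and B) {F}) (B.imp y) :=
      Prf_cut hzB (Prf_weak hzBy (Set.insert_subset_insert (Set.subset_insert _ _)))
    exact Prf.impE himp hB'⟩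

theorem him1_adj (U V W : Lnd F) : W ≤ him1 F U V ↔ W ⊓ U ≤ V := by
  constructor
  · intro h
    rw [Lnd.le_def]
    intro z hz
    rw [mem_inf] at hz
    replace h := (Lnd.le_def F).mp h
    have h1 : (z.and z) ∈ V.1 := h hz.1 z hz.2
    exact Lnd.down F (Prf.andI (pre_refl F z) (pre_refl F z)) h1
  · intro h
    rw [Lnd.le_def]
    intro z hz B hB
    replace h := (Lnd.le_def F).mp h
    have hzB1 : (z.and B) ∈ W.1 := Lnd.down F (Prf.andE1 (pre_refl F _)) hz
    have hzB2 : (z.and B) ∈ U.1 := Lnd.down F (Prf.andE2 (pre_refl F _)) hB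
    exact h (mem_inf F |>.mpr ⟨hzB1, hzB2⟩)

theorem iota_imp {X Y : Formula} : iota F (X.imp Y) = him1 F (iota F X) (iota F Y) := by
  apply Subtype.ext
  ext z
  show Pre F z (X.imp Y) ↔ _
  constructor
  · intro h B hB
    show Pre F (z.and B) Y
    have hz : Prf Flavour.int (insert (z.and B) {F}) (X.imp Y) :=
      Prf_cut (Prf.andE1 (pre_refl F _))
        (Prf_weak h (Set.insert_subset_insert (Set.subset_insert _ _)))
    have hx : Prf Flavour.int (insert (z.and B) {F}) X :=
      Prf_cut (Prf.andE2 (pre_refl F _))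
        (Prf_weak (hB : Pre F B X) (Set.insert_subset_insert (Set.subset_insert _ _)))
    exact Prf.impE hz hx
  · intro h
    have h1 : Pre F (z.and X) Y := h X (pre_refl F X)
    refine Prf.impI ?_
    have h2 : Prf Flavour.int (insert X (insert z {F})) (z.and X) :=
      Prf.andI (Prf.hyp (Set.mem_insert_of_mem _ (Set.mem_insert _ _))) (Prf.hyp (Set.mem_insert _ _))
    exact Prf_cut h2 (Prf_weak h1 (Set.insert_subset_insert
      (Set.subset_insert _ _ |>.trans (Set.subset_insert _ _))))

/-- Freshness data for the quantifier lemmas. -/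
theorem fresh3 (z A : Formula) : ∃ d, fvLt d z ∧ fvLt d F ∧ fvLt (d+1) A := by
  obtain ⟨k1, h1⟩ := fvLt_exists z
  obtain ⟨k2, h2⟩ := fvLt_exists F
  obtain ⟨k3, h3⟩ := fvLt_exists A
  refine ⟨max (max k1 k2) k3, ?_, ?_, ?_⟩
  · exact fvLt_mono (le_trans (le_max_left _ _) (le_max_left _ _)) _ h1
  · exact fvLt_mono (le_trans (le_max_right _ _) (le_max_left _ _)) _ h2
  · exact fvLt_mono (le_trans (le_max_right _ _) (Nat.le_succ _)) _ h3

theorem gen_all {z A : Formula} (h : ∀ d : ℕ, Pre F z (A.subst 0 d)) : Pre F z (Formula.all A) := by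
  obtain ⟨d, hz, hF, hA⟩ := fresh3 F z A
  refine Prf.allI ?_
  have hren := Prf_ren (h d) (swp d)
  rw [Set.image_insert_eq, Set.image_singleton, swp_ren_eq_lift hz, swp_ren_eq_lift hF,
    swp_ren_subst hA] at hren
  rwa [Set.image_insert_eq, Set.image_singleton]

theorem iota_all {A : Formula} : iota F (Formula.all A) = ⨅ d : ℕ, iota F (A.subst 0 d) := by
  apply Subtype.ext
  ext z
  show Pre F z (Formula.all A) ↔ _
  rw [mem_iInf]
  constructor
  · intro h d
    exact Prf.allE d h
  · exact gen_all F

theorem iota_ex {A : Formula} : iota F (Formula.ex A) = ⨆ d : ℕ, iota F (A.subst 0 d) := by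
  apply le_antisymm
  · rw [Lnd.le_def]
    intro z hz
    set W := ⨆ d : ℕ, iota F (A.subst 0 d) with hW
    apply W.2
    intro y hy
    obtain ⟨d, hzf, hF, hA⟩ := fresh3 F (Formula.and z y) A
    have hd : Pre F (A.subst 0 d) y :=
      hy _ ((iota_le_iff F).mp (le_iSup (fun d => iota F (A.subst 0 d)) d))
    refine Prf.exE (hz : Pre F z (Formula.ex A)) ?_
    have hren := Prf_ren hd (swp d)
    rw [Set.image_insert_eq, Set.image_singleton, swp_ren_subst hA, swp_ren_eq_lift hF] at hren
    have hy' : ren (swp d) y = Formula.lift 0 y := swp_ren_eq_lift hzf.2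
    rw [hy'] at hren
    refine Prf_weak hren ?_
    rw [Set.image_insert_eq, Set.image_singleton]
    exact Set.insert_subset_insert (Set.subset_insert _ _)
  · apply iSup_le
    intro d
    exact iota_mono F (Prf.exI d (pre_refl F _))

theorem top_ne_bot_of (h2 : ¬ Prf Flavour.int ∅ F.neg) : ¬ (⊤ : Lnd F) ≤ ⊥ := by
  intro hle
  have hmem : (Formula.bot.imp Formula.bot) ∈ (⊥ : Lnd F).1 := by
    apply (Lnd.le_def F).mp hle
    rw [← iota_le_iff]; exact le_top
  rw [← iota_bot_eq_bot] at hmem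
  have hb : Pre F (Formula.bot.imp Formula.bot) Formula.bot := hmem
  have hF : Prf Flavour.int {F} Formula.bot :=
    Prf_cut (Prf.impI (Prf.hyp (Set.mem_insert _ _))) hb
  apply h2
  refine Prf.impI ?_
  rwa [show insert F (∅ : Set Formula) = {F} by simp]

/-- The canonical model over the completion. -/
def M1 (q : ℕ) : Mdl (Lnd F) ℕ :=
  { him := him1 F
    adj := fun a b c => him1_adj F a b c
    I := fun p ts => if p = q then ⊥ else iota F (.atom p ts) }

theorem eval_M1 (q : ℕ) :
    ∀ A, ¬ hasPred q A → ∀ ρ : ℕ → ℕ, (M1 F q).eval ρ A = iota F (ren ρ A) := by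
  intro A
  induction A with
  | bot => intro _ ρ; exact (iota_bot_eq_bot F).symm
  | atom p ts =>
      intro hA ρ
      have hp : ¬ p = q := hA
      simp only [Mdl.eval, M1, if_neg hp]
      rfl
  | and A B ihA ihB =>
      intro hA ρ
      have h : ¬ hasPred q A ∧ ¬ hasPred q B := not_or.mp hA
      simp only [Mdl.eval, ihA h.1, ihB h.2]
      exact (iota_and F).symm
  | or A B ihA ihB =>
      intro hA ρ
      have h : ¬ hasPred q A ∧ ¬ hasPred q B := not_or.mp hA
      simp only [Mdl.eval, ihA h.1, ihB h.2]
      exact (iota_or F).symm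
  | imp A B ihA ihB =>
      intro hA ρ
      have h : ¬ hasPred q A ∧ ¬ hasPred q B := not_or.mp hA
      simp only [Mdl.eval, ihA h.1, ihB h.2]
      exact (iota_imp F).symm
  | all A ih =>
      intro hA ρ
      simp only [Mdl.eval, fun d => ih hA (envCons d ρ)]
      rw [show ren ρ (Formula.all A) = Formula.all (ren (up ρ) A) from rfl, iota_all F]
      apply iInf_congr
      intro d
      congr 1
      rw [subst_eq_ren, ren_ren]
      apply ren_congr
      intro v
      cases v with
      | zero => simp [Function.comp, substVar, up, envCons]
      | succ v => simp [Function.comp, substVar, up, envCons]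
  | ex A ih =>
      intro hA ρ
      simp only [Mdl.eval, fun d => ih hA (envCons d ρ)]
      rw [show ren ρ (Formula.ex A) = Formula.ex (ren (up ρ) A) from rfl, iota_ex F]
      apply iSup_congr
      intro d
      congr 1
      rw [subst_eq_ren, ren_ren]
      apply ren_congr
      intro v
      cases v with
      | zero => simp [Function.comp, substVar, up, envCons]
      | succ v => simp [Function.comp, substVar, up, envCons]

end Lindenbaum
end Aux


namespace Aux
open Formula

/-! ### The classical (Prop-valued) model -/

def MP : Mdl Prop ℕ :=
  { him := fun a b => a → b
    adj := by
      intro a b c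
      constructor
      · intro h hc
        exact h hc.1 hc.2
      · intro h hc ha
        exact h ⟨hc, ha⟩
    I := fun _ _ => True }

theorem MP_cl : ∀ a c : Prop, c ≤ MP.him (MP.him a ⊥) ⊥ → c ≤ a := by
  intro a c h hc
  by_contra hna
  exact h hc (fun ha => hna ha)

/-! ### Product of two models -/

variable {H H' : Type*} [CompleteLattice H] [CompleteLattice H'] {D : Type*}

def Mprod (M : Mdl H D) (M' : Mdl H' D) : Mdl (H × H') D :=
  { him := fun a b => (M.him a.1 b.1, M'.him a.2 b.2)
    adj := by
      intro a b c
      rw [Prod.le_def, Prod.le_def]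
      simp only [Prod.fst_inf, Prod.snd_inf]
      rw [M.adj, M'.adj]
    I := fun p ts => (M.I p ts, M'.I p ts) }

theorem eval_fst (M : Mdl H D) (M' : Mdl H' D) (A : Formula) (ρ : ℕ → D) :
    ((Mprod M M').eval ρ A).1 = M.eval ρ A := by
  apply eval_hom (Mprod M M') M Prod.fst rfl (fun a b => rfl) (fun a b => rfl)
    (fun g => Prod.fst_iInf g) (fun g => Prod.fst_iSup g) (fun a b => rfl) (fun p ts => rfl)

theorem eval_snd (M : Mdl H D) (M' : Mdl H' D) (A : Formula) (ρ : ℕ → D) :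
    ((Mprod M M').eval ρ A).2 = M'.eval ρ A := by
  apply eval_hom (Mprod M M') M' Prod.snd rfl (fun a b => rfl) (fun a b => rfl)
    (fun g => Prod.snd_iInf g) (fun g => Prod.snd_iSup g) (fun a b => rfl) (fun p ts => rfl)

/-! ### Adjoining a new top element to a complete lattice -/

inductive TopAdj (α : Type*) : Type _
  | tp
  | el (x : α)

namespace TopAdj

variable {α : Type*} [CompleteLattice α]

def Le (a b : TopAdj α) : Prop :=
  match b with
  | tp => True
  | el y =>
      match a with
      | tp => False
      | el x => x ≤ y

instance : PartialOrder (TopAdj α) :=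
  { le := Le
    le_refl := fun a => by cases a with
      | tp => trivial
      | el x => exact le_refl x
    le_trans := fun a b c hab hbc => by
      cases c with
      | tp => trivial
      | el z =>
          cases b with
          | tp => exact absurd hbc (fun h => h)
          | el y =>
              cases a with
              | tp => exact absurd hab (fun h => h)
              | el x => exact le_trans (hab : x ≤ y) (hbc : y ≤ z)
    le_antisymm := fun a b hab hba => by
      cases a with
      | tp =>
          cases b with
          | tp => rfl
          | el y => exact absurd hab (fun h => h)
      | el x =>
          cases b with
          | tp => exact absurd hba (fun h => h)
          | el y => exact congrArg el (le_antisymm (hab : x ≤ y) (hba : y ≤ x)) }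

theorem el_le_el {x y : α} : (el x : TopAdj α) ≤ el y ↔ x ≤ y := Iff.rfl

theorem le_tp (a : TopAdj α) : a ≤ tp := trivial

theorem not_tp_le_el (x : α) : ¬ ((tp : TopAdj α) ≤ el x) := fun h => h

open Classical in
noncomputable instance : InfSet (TopAdj α) :=
  ⟨fun S => if ∀ a ∈ S, a = tp then tp else el (sInf {x | el x ∈ S})⟩

open Classical in
theorem isGLB_sInf (S : Set (TopAdj α)) : IsGLB S (sInf S) := by
  constructor
  · intro a ha
    show sInf S ≤ a
    rw [show sInf S = if ∀ a ∈ S, a = tp then tp else el (sInf {x | el x ∈ S}) from rfl]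
    by_cases h : ∀ a ∈ S, a = tp
    · rw [if_pos h, h a ha]
    · rw [if_neg h]
      cases a with
      | tp => exact le_tp _
      | el x => exact sInf_le (ha : el x ∈ S)
  · intro b hb
    show b ≤ sInf S
    rw [show sInf S = if ∀ a ∈ S, a = tp then tp else el (sInf {x | el x ∈ S}) from rfl]
    by_cases h : ∀ a ∈ S, a = tp
    · rw [if_pos h]
      exact le_tp b
    · rw [if_neg h]
      cases b with
      | tp =>
          exfalso
          apply h
          intro a ha
          have := hb ha
          cases a with
          | tp => rfl
          | el x => exact absurd this (not_tp_le_el x)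
      | el y =>
          rw [el_le_el]
          apply le_sInf
          intro x hx
          exact (hb hx : y ≤ x)

noncomputable instance : CompleteLattice (TopAdj α) := completeLatticeOfInf _ isGLB_sInf

theorem top_eq_tp : (⊤ : TopAdj α) = tp :=
  le_antisymm (le_tp _) le_top

theorem el_ne_top (x : α) : (el x : TopAdj α) ≠ ⊤ := by
  rw [top_eq_tp]
  intro h
  cases h

theorem bot_eq_el_bot : (⊥ : TopAdj α) = el ⊥ := by
  apply le_antisymm bot_le
  rw [show (⊥ : TopAdj α) = sInf Set.univ from sInf_univ.symm]
  apply le_sInf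
  intro a _
  cases a with
  | tp => exact le_tp _
  | el x => exact (el_le_el.mpr (bot_le : (⊥:α) ≤ x) : Le _ _)

theorem el_inf (x y : α) : (el x : TopAdj α) ⊓ el y = el (x ⊓ y) := by
  apply le_antisymm
  · have h1 : (el x : TopAdj α) ⊓ el y ≤ el x := inf_le_left
    have h2 : (el x : TopAdj α) ⊓ el y ≤ el y := inf_le_right
    cases hc : (el x : TopAdj α) ⊓ el y with
    | tp =>
        rw [hc] at h1
        exact absurd h1 (not_tp_le_el x)
    | el z =>
        rw [hc] at h1 h2
        exact el_le_el.mpr (le_inf (el_le_el.mp h1) (el_le_el.mp h2))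
  · exact le_inf (el_le_el.mpr inf_le_left) (el_le_el.mpr inf_le_right)

theorem el_sup (x y : α) : (el x : TopAdj α) ⊔ el y = el (x ⊔ y) := by
  apply le_antisymm
  · exact sup_le (el_le_el.mpr le_sup_left) (el_le_el.mpr le_sup_right)
  · have h1 : (el x : TopAdj α) ≤ el x ⊔ el y := le_sup_left
    have h2 : (el y : TopAdj α) ≤ el x ⊔ el y := le_sup_right
    cases hc : (el x : TopAdj α) ⊔ el y with
    | tp => exact le_tp _
    | el z =>
        rw [hc] at h1 h2
        exact el_le_el.mpr (sup_le (el_le_el.mp h1) (el_le_el.mp h2))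

noncomputable def unel : TopAdj α → α
  | tp => ⊤
  | el x => x

@[simp] theorem unel_tp : unel (tp : TopAdj α) = ⊤ := rfl

theorem unel_top : unel (⊤ : TopAdj α) = ⊤ := by rw [top_eq_tp]; rfl
@[simp] theorem unel_el (x : α) : unel (el x : TopAdj α) = x := rfl

theorem unel_mono {a b : TopAdj α} (h : a ≤ b) : unel a ≤ unel b := by
  cases b with
  | tp => exact le_top
  | el y =>
      cases a with
      | tp => exact absurd h (not_tp_le_el y)
      | el x => exact el_le_el.mp h

theorem unel_bot : unel (⊥ : TopAdj α) = ⊥ := by rw [bot_eq_el_bot]; rfl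

theorem unel_inf (a b : TopAdj α) : unel (a ⊓ b) = unel a ⊓ unel b := by
  cases a with
  | tp => rw [← top_eq_tp, top_inf_eq, unel_top, top_inf_eq]
  | el x =>
      cases b with
      | tp => rw [← top_eq_tp, inf_top_eq, unel_top, inf_top_eq]
      | el y => rw [el_inf, unel_el, unel_el, unel_el]

theorem unel_sup (a b : TopAdj α) : unel (a ⊔ b) = unel a ⊔ unel b := by
  cases a with
  | tp => rw [← top_eq_tp, top_sup_eq, unel_top, top_sup_eq]
  | el x =>
      cases b with
      | tp => rw [← top_eq_tp, sup_top_eq, unel_top, sup_top_eq]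
      | el y => rw [el_sup, unel_el, unel_el, unel_el]

theorem unel_iInf {ι : Sort*} [Nonempty ι] (g : ι → TopAdj α) :
    unel (⨅ i, g i) = ⨅ i, unel (g i) := by
  by_cases h : ∀ i, g i = tp
  · rw [iInf_eq_top.mpr (fun i => by rw [h i, ← top_eq_tp]),
      iInf_eq_top.mpr (fun i => by rw [h i, unel_tp]), top_eq_tp, unel_tp]
  · have key : (⨅ i, g i) = el (⨅ i, unel (g i)) := by
      apply le_antisymm
      · push_neg at h
        obtain ⟨i₀, hi₀⟩ := h
        have h1 : (⨅ i, g i) ≤ g i₀ := iInf_le g i₀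
        cases hc : (⨅ i, g i) with
        | tp =>
            exfalso
            apply hi₀
            rw [hc] at h1
            cases hgi : g i₀ with
            | tp => rfl
            | el x => rw [hgi] at h1; exact absurd h1 (not_tp_le_el x)
        | el z =>
            rw [el_le_el]
            apply le_iInf
            intro i
            cases hgi : g i with
            | tp => rw [unel_tp]; exact le_top
            | el x =>
                have h2 : (el z : TopAdj α) ≤ el x := by
                  rw [← hc, ← hgi]
                  exact iInf_le g i
                rw [unel_el]
                exact el_le_el.mp h2
      · apply le_iInf
        intro i
        cases hgi : g i with
        | tp => exact le_tp _
        | el x =>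
            rw [el_le_el]
            exact le_trans (iInf_le (fun i => unel (g i)) i) (le_of_eq (by rw [hgi, unel_el]))
    rw [key, unel_el]

theorem unel_iSup {ι : Sort*} [Nonempty ι] (g : ι → TopAdj α) :
    unel (⨆ i, g i) = ⨆ i, unel (g i) := by
  by_cases h : ∃ i, g i = tp
  · obtain ⟨i₀, hi₀⟩ := h
    have h1 : (⨆ i, g i) = tp := by
      apply le_antisymm (le_tp _)
      rw [← hi₀]
      exact le_iSup g i₀
    rw [h1, unel_tp]
    apply le_antisymm
    · have h2 : unel (g i₀) = ⊤ := by rw [hi₀, unel_tp]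
      rw [← h2]
      exact le_iSup (fun i => unel (g i)) i₀
    · exact le_top
  · push_neg at h
    have key : (⨆ i, g i) = el (⨆ i, unel (g i)) := by
      apply le_antisymm
      · apply iSup_le
        intro i
        cases hgi : g i with
        | tp => exact absurd hgi (h i)
        | el x =>
            rw [el_le_el]
            exact le_trans (le_of_eq (by rw [hgi, unel_el])) (le_iSup (fun i => unel (g i)) i)
      · cases hc : (⨆ i, g i) with
        | tp => exact le_tp _
        | el w =>
            rw [el_le_el]
            apply iSup_le
            intro i
            cases hgi : g i with
            | tp => exact absurd hgi (h i)
            | el x =>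
                have h2 : (el x : TopAdj α) ≤ el w := by
                  rw [← hc, ← hgi]
                  exact le_iSup g i
                rw [unel_el]
                exact el_le_el.mp h2
    rw [key, unel_el]

end TopAdj

section MTop

open TopAdj

open Classical in
noncomputable def MTop (M : Mdl H D) : Mdl (TopAdj H) D :=
  { him := fun a b => if a ≤ b then tp else el (M.him (unel a) (unel b))
    adj := by
      intro a b c
      show c ≤ (if a ≤ b then tp else el (M.him (unel a) (unel b))) ↔ c ⊓ a ≤ b
      by_cases hab : a ≤ b
      · rw [if_pos hab]
        constructor
        · intro _; exact le_trans inf_le_right hab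
        · intro _; exact le_tp c
      · rw [if_neg hab]
        cases b with
        | tp => exact absurd (le_tp a) hab
        | el b' =>
            cases c with
            | tp =>
                constructor
                · intro h
                  exact absurd h (not_tp_le_el _)
                · intro h
                  rw [← top_eq_tp, top_inf_eq] at h
                  exact absurd h hab
            | el c' =>
                cases a with
                | tp =>
                    rw [show unel (tp : TopAdj H) = ⊤ from rfl, unel_el, M.him_top]
                    rw [← top_eq_tp, inf_top_eq]
                | el a' =>
                    rw [el_inf, el_le_el, el_le_el, unel_el, unel_el]
                    exact M.adj a' b' c'
    I := fun p ts => el (M.I p ts) }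

theorem unel_him (M : Mdl H D) (a b : TopAdj H) :
    unel ((MTop M (D := D)).him a b) = M.him (unel a) (unel b) := by
  classical
  by_cases hab : a ≤ b
  · have h1 : (MTop M (D := D)).him a b = tp := by simp [MTop, hab]
    rw [h1, unel_tp]
    exact (M.him_eq_top (unel_mono hab)).symm
  · have h1 : (MTop M (D := D)).him a b = el (M.him (unel a) (unel b)) := by simp [MTop, hab]
    rw [h1, unel_el]

theorem eval_MTop_unel [Nonempty D] (M : Mdl H D) (A : Formula) (ρ : ℕ → D) :
    unel ((MTop M).eval ρ A) = M.eval ρ A := by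
  apply eval_hom (MTop M) M unel unel_bot unel_inf unel_sup
    (fun g => unel_iInf g) (fun g => unel_iSup g) (unel_him M) (fun p ts => rfl)

end MTop
end Aux


namespace Aux
open Formula TopAdj

theorem MTop_him_pos {H D : Type*} [CompleteLattice H] (M : Mdl H D) {a b : TopAdj H}
    (h : a ≤ b) : (MTop M).him a b = tp := by
  classical
  simp [MTop, h]

theorem MTop_him_neg {H D : Type*} [CompleteLattice H] (M : Mdl H D) {a b : TopAdj H}
    (h : ¬ a ≤ b) : (MTop M).him a b = el (M.him (unel a) (unel b)) := by
  classical
  simp [MTop, h]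

theorem prop_le_elim {p r : Prop} (h : p ≤ r) (hp : p) : r := h hp

theorem main (F : Formula) (q : ℕ)
    (h1 : Prf Flavour.cl ∅ F.neg) (h2 : ¬ Prf Flavour.int ∅ F.neg)
    (hq : ¬ hasPred q F) :
    ¬ Prf Flavour.int ∅ ((N2 F (Formula.atom q [])).imp (N1 F (Formula.atom q []))) := by
  intro hP
  classical
  have hnt : ¬ (⊤ : Lnd F) ≤ ⊥ := top_ne_bot_of F h2
  have e2 : N2 F (Formula.atom q []) =
      ((Formula.atom q []).imp F).imp F := rfl
  have e1 : N1 F (Formula.atom q []) =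
      (((Formula.atom q []).imp Formula.bot).imp Formula.bot).or F := rfl
  -- classical component of F is false
  have hFP' : MP.eval id F = False := by
    have hs := sound (f := Flavour.cl) MP (fun _ => MP_cl) h1 id ⊤
      (fun B hB => absurd hB (Set.notMem_empty B))
    simp only [Formula.neg, Mdl.eval] at hs
    apply eq_false
    intro hF
    have : MP.him (MP.eval id F) ⊥ := hs trivial
    exact Prop.bot_eq_false ▸ (this hF)
  -- intuitionistic component of F is ⊤
  have hF1 : (M1 F q).eval id F = ⊤ := by
    rw [eval_M1 F q F hq id, ren_id, iota_F_eq_top]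
  -- the product value of F
  have hW : (Mprod (M1 F q) MP).eval id F = ((⊤ : Lnd F), False) := by
    apply Prod.ext
    · rw [eval_fst]
      exact hF1
    · rw [eval_snd]
      exact hFP'
  -- the value of F in the joined model
  have hfB : (MTop (Mprod (M1 F q) MP)).eval id F = el ((⊤ : Lnd F), False) := by
    have hu : unel ((MTop (Mprod (M1 F q) MP)).eval id F) = (Mprod (M1 F q) MP).eval id F :=
      eval_MTop_unel (Mprod (M1 F q) MP) F id
    cases hc : (MTop (Mprod (M1 F q) MP)).eval id F with
    | tp =>
        exfalso
        rw [hc, unel_tp, hW] at hu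
        have hsnd := congrArg Prod.snd hu.symm
        simp only [Prod.snd_top, Prop.top_eq_true] at hsnd
        exact hsnd ▸ trivial
    | el x =>
        rw [hc, unel_el] at hu
        rw [hu, hW]
  -- the value of Q in the joined model
  have hQB : (MTop (Mprod (M1 F q) MP)).eval id (Formula.atom q [])
      = el ((⊥ : Lnd F), (True : Prop)) := by
    show el ((M1 F q).I q (List.map id []), MP.I q (List.map id [])) = _
    simp [M1, MP]
  -- the value of ⊥ in the joined model
  have hBB : (MTop (Mprod (M1 F q) MP)).eval id Formula.bot
      = el ((⊥ : Lnd F), (False : Prop)) := by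
    show (⊥ : TopAdj (Lnd F × Prop)) = _
    rw [bot_eq_el_bot]
    congr 1
  -- step 1 : Q.imp F
  have s1 : (MTop (Mprod (M1 F q) MP)).eval id ((Formula.atom q []).imp F)
      = el ((⊤ : Lnd F), (False : Prop)) := by
    show (MTop (Mprod (M1 F q) MP)).him
      ((MTop (Mprod (M1 F q) MP)).eval id (Formula.atom q []))
      ((MTop (Mprod (M1 F q) MP)).eval id F) = _
    rw [hQB, hfB, MTop_him_neg _ (fun hle => prop_le_elim (Prod.le_def.mp (el_le_el.mp hle)).2 trivial), unel_el, unel_el]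
    rw [show (Mprod (M1 F q) MP).him ((⊥ : Lnd F), (True : Prop)) ((⊤ : Lnd F), (False : Prop))
        = ((M1 F q).him ⊥ ⊤, MP.him True False) from rfl]
    rw [Mdl.him_eq_top (M1 F q) le_top,
      show MP.him True False = (False : Prop) from eq_false (fun h => h trivial)]
  -- step 2 : N2 = (Q.imp F).imp F  evaluates to the new top
  have s2 : (MTop (Mprod (M1 F q) MP)).eval id (((Formula.atom q []).imp F).imp F) = tp := by
    show (MTop (Mprod (M1 F q) MP)).him
      ((MTop (Mprod (M1 F q) MP)).eval id ((Formula.atom q []).imp F))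
      ((MTop (Mprod (M1 F q) MP)).eval id F) = _
    rw [s1, hfB]
    exact MTop_him_pos _ le_rfl
  -- step 3 : Q.imp ⊥
  have s3 : (MTop (Mprod (M1 F q) MP)).eval id ((Formula.atom q []).imp Formula.bot)
      = el ((⊤ : Lnd F), (False : Prop)) := by
    show (MTop (Mprod (M1 F q) MP)).him
      ((MTop (Mprod (M1 F q) MP)).eval id (Formula.atom q []))
      ((MTop (Mprod (M1 F q) MP)).eval id Formula.bot) = _
    rw [hQB, hBB, MTop_him_neg _ (fun hle => prop_le_elim (Prod.le_def.mp (el_le_el.mp hle)).2 trivial), unel_el, unel_el]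
    rw [show (Mprod (M1 F q) MP).him ((⊥ : Lnd F), (True : Prop)) ((⊥ : Lnd F), (False : Prop))
        = ((M1 F q).him ⊥ ⊥, MP.him True False) from rfl]
    rw [Mdl.him_eq_top (M1 F q) le_rfl,
      show MP.him True False = (False : Prop) from eq_false (fun h => h trivial)]
  -- step 4 : (Q.imp ⊥).imp ⊥
  have s4 : (MTop (Mprod (M1 F q) MP)).eval id
      (((Formula.atom q []).imp Formula.bot).imp Formula.bot)
      = el ((⊥ : Lnd F), (True : Prop)) := by
    show (MTop (Mprod (M1 F q) MP)).him
      ((MTop (Mprod (M1 F q) MP)).eval id ((Formula.atom q []).imp Formula.bot))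
      ((MTop (Mprod (M1 F q) MP)).eval id Formula.bot) = _
    rw [s3, hBB, MTop_him_neg _ (fun hle => hnt (Prod.le_def.mp (el_le_el.mp hle)).1), unel_el, unel_el]
    rw [show (Mprod (M1 F q) MP).him ((⊤ : Lnd F), (False : Prop)) ((⊥ : Lnd F), (False : Prop))
        = ((M1 F q).him ⊤ ⊥, MP.him False False) from rfl]
    rw [Mdl.him_top (M1 F q) ⊥,
      show MP.him False False = (True : Prop) from eq_true (fun h => h)]
  -- step 5 : N1 = ((Q.imp ⊥).imp ⊥).or F
  have s5 : (MTop (Mprod (M1 F q) MP)).eval id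
      ((((Formula.atom q []).imp Formula.bot).imp Formula.bot).or F)
      = el ((⊤ : Lnd F), (True : Prop)) := by
    show ((MTop (Mprod (M1 F q) MP)).eval id
        (((Formula.atom q []).imp Formula.bot).imp Formula.bot)) ⊔
      ((MTop (Mprod (M1 F q) MP)).eval id F) = _
    have hTF : (True : Prop) ⊔ (False : Prop) = (True : Prop) := by
      simp
    rw [s4, hfB, el_sup, Prod.mk_sup_mk, bot_sup_eq, hTF]
  -- final computation
  have s6 : (MTop (Mprod (M1 F q) MP)).eval id
      ((N2 F (Formula.atom q [])).imp (N1 F (Formula.atom q [])))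
      = el ((Mprod (M1 F q) MP).him (unel tp) (unel (el ((⊤ : Lnd F), (True : Prop))))) := by
    show (MTop (Mprod (M1 F q) MP)).him
      ((MTop (Mprod (M1 F q) MP)).eval id (N2 F (Formula.atom q [])))
      ((MTop (Mprod (M1 F q) MP)).eval id (N1 F (Formula.atom q []))) = _
    rw [e2, e1, s2, s5]
    exact MTop_him_neg _ (not_tp_le_el _)
  have hs := sound (f := Flavour.int) (MTop (Mprod (M1 F q) MP))
    (fun h => Flavour.noConfusion h) hP id ⊤
    (fun B hB => absurd hB (Set.notMem_empty B))
  rw [s6] at hs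
  exact el_ne_top _ (top_le_iff.mp hs)

end Aux


/-- If CL ⊢ ¬F but IL ⊬ ¬F, then N₁ and N₂ are not equivalent in IL:
for a fresh propositional atom Q, IL ⊬ N₂(Q) → N₁(Q). -/
theorem N1_N2_not_equiv (F : Formula) (q : ℕ)
    (h1 : Prf Flavour.cl ∅ F.neg) (h2 : ¬ Prf Flavour.int ∅ F.neg)
    (hq : ¬ hasPred q F) :
    ¬ Prf Flavour.int ∅ ((N2 F (Formula.atom q [])).imp (N1 F (Formula.atom q []))) := by
  exact Aux.main F q h1 h2 hq
end
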